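/- arXiv:1309.0254 — 2 statements merged into one kernel-verified Lean document; each statement's English description precedes it below -/
import Mathlib

section
/- Fix n ≥ 1 and permutations v, w in S_n. The polynomial σ_v(w) (computed from any reduced word for w) has nonnegative integer coefficients when expanded as a polynomial in the simple roots α_1, ..., α_{n−1}; that is, σ_v(w) lies in the subsemiring of ℤ[t_1, ..., t_n] generated over ℕ by α_1, ..., α_{n−1}. -/
open Equiv MvPolynomial

/-- The adjacent transposition `s_i = (i, i+1)` in `S_n` (defined to be `1` if `i+1 ≥ n`). -/
def simpleRefl (n : ℕ) (i : ℕ) : Equiv.Perm (Fin n) :=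
  if h : i + 1 < n then Equiv.swap ⟨i, Nat.lt_of_succ_lt h⟩ ⟨i + 1, h⟩ else 1

/-- A word is a list of indices `i` with `i + 1 < n` (0-indexed version of `1 ≤ i ≤ n-1`). -/
def IsWord (n : ℕ) (l : List ℕ) : Prop := ∀ b ∈ l, b + 1 < n

/-- The product `s_{b_1} ⋯ s_{b_m}` of the simple reflections of a word. -/
def wordProd (n : ℕ) (l : List ℕ) : Equiv.Perm (Fin n) := (l.map (simpleRefl n)).prod

/-- `l` is a reduced word for `w`: its product is `w` and no shorter word has product `w`. -/
def IsReducedWord (n : ℕ) (w : Equiv.Perm (Fin n)) (l : List ℕ) : Prop :=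
  IsWord n l ∧ wordProd n l = w ∧
    ∀ l' : List ℕ, IsWord n l' → wordProd n l' = w → l.length ≤ l'.length

/-- The Coxeter length `ℓ(w)`: the length of any reduced word for `w`. -/
noncomputable def coxLen (n : ℕ) (w : Equiv.Perm (Fin n)) : ℕ :=
  sInf {m | ∃ l : List ℕ, IsWord n l ∧ wordProd n l = w ∧ l.length = m}

/-- Bruhat order: the partial order generated by `v < t * v` whenever `t` is a
transposition and `ℓ(v) < ℓ(t * v)`. -/
def BruhatLE (n : ℕ) : Equiv.Perm (Fin n) → Equiv.Perm (Fin n) → Prop :=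
  Relation.ReflTransGen fun x y =>
    (∃ t : Equiv.Perm (Fin n), t.IsSwap ∧ y = t * x) ∧ coxLen n x < coxLen n y

/-- The simple root `α_i = t_i - t_{i+1}` in `ℤ[t_1, …, t_n]` (defined as `0` if `i+1 ≥ n`). -/
noncomputable def simpleRoot (n : ℕ) (i : ℕ) : MvPolynomial (Fin n) ℤ :=
  if h : i + 1 < n then X ⟨i, Nat.lt_of_succ_lt h⟩ - X ⟨i + 1, h⟩ else 0

/-- The root `r_j = (s_{b_1} ⋯ s_{b_{j-1}}) · α_{b_j}` associated to position `j` of a word,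
where `S_n` acts on polynomials by permuting variables. -/
noncomputable def wordRoot (n : ℕ) (l : List ℕ) (j : Fin l.length) : MvPolynomial (Fin n) ℤ :=
  rename (⇑(wordProd n (l.take j))) (simpleRoot n (l.get j))

open scoped Classical in
/-- Billey's formula `σ_v(w)`, computed from the reduced word `l` of `w`: the sum over all
index sequences `j_1 < ⋯ < j_k` such that `(b_{j_1}, …, b_{j_k})` is a reduced word for `v`,
of the products `r_{j_1} ⋯ r_{j_k}`. -/
noncomputable def billey (n : ℕ) (v : Equiv.Perm (Fin n)) (l : List ℕ) :
    MvPolynomial (Fin n) ℤ :=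
  ∑ J : Finset (Fin l.length),
    if IsReducedWord n v ((J.sort (· ≤ ·)).map l.get) then ∏ j ∈ J, wordRoot n l j else 0

/-!
Let `b₁ ⋯ bₘ` be a reduced word for `w` and `u = s_{b₁} ⋯ s_{b_{j-1}}`. Right multiplication by an
adjacent transposition changes the number of inversions by exactly one, and a reduced word has
as many letters as its product has inversions, so every letter must add an inversion:
`u(b_j) < u(b_j + 1)`. Hence each root `r_j = t_{u(b_j)} - t_{u(b_j + 1)}` is a positive root
`t_a - t_c` with `a < c`, that is `α_a + ⋯ + α_{c-1}`, and `σ_v(w)`, a sum of products of such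
roots, lies in the semiring generated by the simple roots.
-/
variable {n : ℕ}

namespace Equiv.Perm

def inversions (w : Perm (Fin n)) : Finset (Fin n × Fin n) :=
  {p | p.1 < p.2 ∧ w p.2 < w p.1}

def invNum (w : Perm (Fin n)) : ℕ := (inversions w).card

@[simp]
lemma mem_inversions {w : Perm (Fin n)} {p : Fin n × Fin n} :
    p ∈ inversions w ↔ p.1 < p.2 ∧ w p.2 < w p.1 := by
  simp [inversions]

lemma invNum_one : invNum (1 : Perm (Fin n)) = 0 := by
  simp only [invNum, inversions, Finset.card_eq_zero, Finset.filter_eq_empty_iff]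
  exact fun p _ h => lt_asymm h.1 h.2

lemma swap_lt_swap_iff_of_adjacent {a b x y : Fin n} (hab : (b : ℕ) = a + 1)
    (hxy : (x, y) ≠ (b, a)) (hyx : (x, y) ≠ (a, b)) :
    swap a b x < swap a b y ↔ x < y := by
  simp only [ne_eq, Prod.mk.injEq, Fin.ext_iff] at hxy hyx
  simp only [swap_apply_def, Fin.lt_def, Fin.ext_iff]
  split_ifs <;> omega

lemma inversions_mul_swap_of_lt {a b : Fin n} (hab : (b : ℕ) = a + 1) {w : Perm (Fin n)}
    (hw : w a < w b) :
    inversions (w * swap a b) =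
      insert (a, b) ((inversions w).map ((swap a b).prodCongr (swap a b)).toEmbedding) := by
  have hlt : a < b := by simp [Fin.lt_def, hab]
  ext ⟨x, y⟩
  simp only [mem_inversions, Finset.mem_insert, Finset.mem_map_equiv, prodCongr_symm,
    symm_swap, prodCongr_apply, Prod.map, Perm.mul_apply]
  by_cases hba : (x, y) = (b, a)
  · simp only [Prod.mk.injEq] at hba
    obtain ⟨rfl, rfl⟩ := hba
    simp [hw.not_gt, hlt.ne']
  by_cases hab' : (x, y) = (a, b)
  · simp only [Prod.mk.injEq] at hab'
    obtain ⟨rfl, rfl⟩ := hab'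
    simp [hw, hlt]
  rw [swap_lt_swap_iff_of_adjacent hab hba hab']
  simp [hab']

lemma invNum_mul_swap_of_lt {a b : Fin n} (hab : (b : ℕ) = a + 1) {w : Perm (Fin n)}
    (hw : w a < w b) : invNum (w * swap a b) = invNum w + 1 := by
  have hba : (a, b) ∉ (inversions w).map ((swap a b).prodCongr (swap a b)).toEmbedding := by
    simp [Finset.mem_map_equiv, ← Fin.val_fin_lt, hab]
  rw [invNum, inversions_mul_swap_of_lt hab hw, Finset.card_insert_of_notMem hba,
    Finset.card_map, invNum]

lemma invNum_mul_swap_of_gt {a b : Fin n} (hab : (b : ℕ) = a + 1) {w : Perm (Fin n)}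
    (hw : w b < w a) : invNum (w * swap a b) + 1 = invNum w := by
  have h := invNum_mul_swap_of_lt hab (w := w * swap a b) (by simpa using hw)
  rwa [mul_assoc, swap_mul_self, mul_one, eq_comm] at h

lemma invNum_mul_simpleRefl_le (w : Perm (Fin n)) (i : ℕ) :
    invNum (w * simpleRefl n i) ≤ invNum w + 1 := by
  unfold simpleRefl
  split_ifs with h
  · rcases lt_or_gt_of_ne (w.injective.ne (a₁ := ⟨i, Nat.lt_of_succ_lt h⟩) (a₂ := ⟨i + 1, h⟩)
      (by simp [Fin.ext_iff])) with hw | hw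
    · exact (invNum_mul_swap_of_lt rfl hw).le
    · have := invNum_mul_swap_of_gt rfl hw
      omega
  · simp

lemma eq_one_of_forall_lt_succ (w : Perm (Fin n))
    (hw : ∀ (i : ℕ) (h : i + 1 < n), w ⟨i, Nat.lt_of_succ_lt h⟩ < w ⟨i + 1, h⟩) : w = 1 := by
  cases n with
  | zero => exact Subsingleton.elim _ _
  | succ m =>
    have hmono : StrictMono w := Fin.strictMono_iff_lt_succ.mpr fun i => hw i (by omega)
    have : StrictMono.orderIsoOfSurjective w hmono w.surjective = OrderIso.refl _ :=
      Subsingleton.elim _ _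
    ext x
    exact congrArg Fin.val (DFunLike.congr_fun this x)

end Equiv.Perm

open Perm

lemma wordProd_cons (b : ℕ) (l : List ℕ) :
    wordProd n (b :: l) = simpleRefl n b * wordProd n l := by
  simp [wordProd]

lemma wordProd_append (l₁ l₂ : List ℕ) :
    wordProd n (l₁ ++ l₂) = wordProd n l₁ * wordProd n l₂ := by
  simp [wordProd]

lemma invNum_mul_wordProd_le (w : Perm (Fin n)) (l : List ℕ) :
    invNum (w * wordProd n l) ≤ invNum w + l.length := by
  induction l generalizing w with
  | nil => simp [wordProd]
  | cons b l ih =>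
    rw [wordProd_cons, ← mul_assoc, List.length_cons]
    have := invNum_mul_simpleRefl_le w b
    have := ih (w * simpleRefl n b)
    omega

/-- Bubble sort: right multiplication by `s_i` at a descent `i` removes one inversion. -/
lemma exists_word_length_eq_invNum (w : Perm (Fin n)) :
    ∃ l, IsWord n l ∧ wordProd n l = w ∧ l.length = invNum w := by
  induction hk : invNum w using Nat.strong_induction_on generalizing w with
  | _ k ih =>
    by_cases hw : w = 1
    · subst hw
      exact ⟨[], by simp [IsWord], rfl, by simp [← hk, invNum_one]⟩
    obtain ⟨i, h, hdesc⟩ : ∃ (i : ℕ) (h : i + 1 < n),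
        w ⟨i + 1, h⟩ < w ⟨i, Nat.lt_of_succ_lt h⟩ := by
      by_contra! hasc
      refine hw (eq_one_of_forall_lt_succ w fun i h => (hasc i h).lt_of_ne ?_)
      exact w.injective.ne (by simp [Fin.ext_iff])
    have hinv := invNum_mul_swap_of_gt rfl hdesc
    obtain ⟨l, hword, hprod, hlen⟩ :=
      ih _ (by omega) (w * swap ⟨i, Nat.lt_of_succ_lt h⟩ ⟨i + 1, h⟩) rfl
    refine ⟨l ++ [i], ?_, ?_, by simp only [List.length_append, List.length_singleton, hlen]; omega⟩
    · simpa [IsWord, or_imp, forall_and] using ⟨hword, h⟩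
    · rw [wordProd_append, hprod]
      simp [wordProd, simpleRefl, h]

lemma IsReducedWord.length_eq_invNum {w : Perm (Fin n)} {l : List ℕ}
    (hl : IsReducedWord n w l) : l.length = invNum w := by
  obtain ⟨l₀, hword, hprod, hlen⟩ := exists_word_length_eq_invNum w
  have := invNum_mul_wordProd_le (1 : Perm (Fin n)) l
  rw [one_mul, hl.2.1, invNum_one] at this
  have := hl.2.2 l₀ hword hprod
  omega

/-- Otherwise `s_b` would remove an inversion, and the remaining letters could not make up
for it. -/
lemma IsReducedWord.lt_of_eq_append_cons {w : Perm (Fin n)} {p q : List ℕ} {b : ℕ}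
    (hl : IsReducedWord n w (p ++ b :: q)) (hb : b + 1 < n) :
    wordProd n p ⟨b, Nat.lt_of_succ_lt hb⟩ < wordProd n p ⟨b + 1, hb⟩ := by
  by_contra! hle
  have hdesc := invNum_mul_swap_of_gt rfl <| hle.lt_of_ne' <|
    (wordProd n p).injective.ne (by simp [Fin.ext_iff])
  have hlen := hl.length_eq_invNum
  have hp := invNum_mul_wordProd_le (1 : Perm (Fin n)) p
  have hq := invNum_mul_wordProd_le (wordProd n p * simpleRefl n b) q
  rw [one_mul, invNum_one] at hp
  rw [mul_assoc, ← wordProd_cons, ← wordProd_append, hl.2.1] at hq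
  simp only [simpleRefl, hb, dite_true, List.length_append, List.length_cons] at hq hlen
  omega

noncomputable def simpleRootSemiring (n : ℕ) : Subsemiring (MvPolynomial (Fin n) ℤ) :=
  Subsemiring.closure {p | ∃ i : ℕ, i + 1 < n ∧ p = simpleRoot n i}

lemma simpleRoot_mem_simpleRootSemiring {i : ℕ} (h : i + 1 < n) :
    simpleRoot n i ∈ simpleRootSemiring n :=
  Subsemiring.subset_closure ⟨i, h, rfl⟩

/-- `t_a - t_b = α_a + α_{a+1} + ⋯ + α_{b-1}` for `a < b`. -/
lemma X_sub_X_mem_simpleRootSemiring {a b : Fin n} (hab : a < b) :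
    (X a - X b : MvPolynomial (Fin n) ℤ) ∈ simpleRootSemiring n := by
  obtain ⟨b, hb⟩ := b
  have hab' : (a : ℕ) + 1 ≤ b := hab
  clear hab
  induction b, hab' using Nat.le_induction with
  | base => simpa [simpleRoot, hb] using simpleRoot_mem_simpleRootSemiring hb
  | succ k _ ih =>
    have hsplit : (X a - X ⟨k + 1, hb⟩ : MvPolynomial (Fin n) ℤ) =
        (X a - X ⟨k, Nat.lt_of_succ_lt hb⟩) + simpleRoot n k := by
      rw [simpleRoot, dif_pos hb]
      ring
    rw [hsplit]
    exact add_mem (ih _) (simpleRoot_mem_simpleRootSemiring hb)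

lemma IsReducedWord.wordRoot_mem_simpleRootSemiring {w : Perm (Fin n)} {l : List ℕ}
    (hl : IsReducedWord n w l) (j : Fin l.length) :
    wordRoot n l j ∈ simpleRootSemiring n := by
  have hb : l[(j : ℕ)] + 1 < n := hl.1 _ (List.getElem_mem j.2)
  have hsplit : l = l.take j ++ l[(j : ℕ)] :: l.drop (j + 1) := by
    rw [← List.drop_eq_getElem_cons, List.take_append_drop]
  have hasc := (hsplit ▸ hl).lt_of_eq_append_cons hb
  rw [wordRoot, List.get_eq_getElem, simpleRoot, dif_pos hb, map_sub, rename_X, rename_X]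
  exact X_sub_X_mem_simpleRootSemiring hasc

theorem billey_stmt_11_general (n : ℕ) (v w : Equiv.Perm (Fin n))
    (l : List ℕ) (hl : IsReducedWord n w l) :
    billey n v l ∈
      Subsemiring.closure {p : MvPolynomial (Fin n) ℤ |
        ∃ i : ℕ, i + 1 < n ∧ p = simpleRoot n i} := by
  refine Subsemiring.sum_mem _ fun J _ => ?_
  split_ifs
  · exact Subsemiring.prod_mem _ fun j _ => hl.wordRoot_mem_simpleRootSemiring j
  · exact zero_mem _

/-- `σ_v(w)` has nonnegative integer coefficients as a polynomial in the simple
roots: it lies in the subsemiring of `ℤ[t_1, …, t_n]` generated (over `ℕ`) by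
`α_1, …, α_{n-1}`. -/
theorem billey_stmt_11 (n : ℕ) (hn : 1 ≤ n) (v w : Equiv.Perm (Fin n))
    (l : List ℕ) (hl : IsReducedWord n w l) :
    billey n v l ∈
      Subsemiring.closure {p : MvPolynomial (Fin n) ℤ |
        ∃ i : ℕ, i + 1 < n ∧ p = simpleRoot n i} :=
  billey_stmt_11_general n v w l hl
end

section
/- Fix n ≥ 1 and let w_0 be the longest element of S_n (the order-reversing permutation w_0(i) = n + 1 − i). Then σ_{w_0}(w_0) equals the product of all positive roots: σ_{w_0}(w_0) = ∏_{1 ≤ a < b ≤ n} (t_a − t_b). -/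
open Equiv MvPolynomial

/-! For a reduced word `b₁ ⋯ b_m` of `w`, put `π_j = s_{b₁} ⋯ s_{b_j}`. Since the word is
reduced, each step `π_j = π_{j-1} s_{b_j}` adds exactly one pair to the inversion set of `π_j`,
namely the pair of values at positions `b_j, b_j + 1`, and this pair is the root `r_j`. Hence
the `r_j` are the roots `t_a - t_b` with `a < b` and `w⁻¹ b < w⁻¹ a`; for `w₀` these are all
positive roots. Finally, a proper subword of a reduced word for `w₀` is too short to be a
reduced word for `w₀`, so Billey's sum has the single term `r₁ ⋯ r_m`. -/

open Finset

/-- `(a, b) ∈ invSet n π` records the positive root `t_a - t_b` that `π⁻¹` makes negative. -/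
def invSet (n : ℕ) (π : Equiv.Perm (Fin n)) : Finset (Fin n × Fin n) :=
  univ.filter fun p => p.1 < p.2 ∧ π⁻¹ p.2 < π⁻¹ p.1

section
variable {n : ℕ}

lemma mem_invSet {π : Equiv.Perm (Fin n)} {p : Fin n × Fin n} :
    p ∈ invSet n π ↔ p.1 < p.2 ∧ π⁻¹ p.2 < π⁻¹ p.1 := by
  simp [invSet]

lemma invSet_eq_empty_of_strictMono {π : Equiv.Perm (Fin n)} (hπ : StrictMono π) :
    invSet n π = ∅ := by
  ext ⟨x, y⟩
  simp only [mem_invSet, notMem_empty, iff_false, not_and, not_lt]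
  intro hxy
  simpa using (hπ.le_iff_le (a := π⁻¹ x) (b := π⁻¹ y)).mp (by simpa using hxy.le)

lemma invSet_one : invSet n 1 = ∅ :=
  invSet_eq_empty_of_strictMono (Equiv.Perm.coe_one (α := Fin n) ▸ strictMono_id)

lemma invSet_revPerm :
    invSet n Fin.revPerm = univ.filter fun p : Fin n × Fin n => p.1 < p.2 := by
  ext ⟨x, y⟩
  simp [mem_invSet, Fin.revPerm_symm]

lemma apply_mk_notMem_invSet {π : Equiv.Perm (Fin n)} {a b : Fin n} (hab : a ≤ b) :
    (π a, π b) ∉ invSet n π := by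
  simp [mem_invSet, hab]

lemma apply_lt_or_gt {k : ℕ} (h : k + 1 < n) (π : Equiv.Perm (Fin n)) :
    π ⟨k, Nat.lt_of_succ_lt h⟩ < π ⟨k + 1, h⟩ ∨
      π ⟨k + 1, h⟩ < π ⟨k, Nat.lt_of_succ_lt h⟩ :=
  lt_or_gt_of_ne (π.injective.ne (by simp [Fin.ext_iff]))

lemma exists_descent_of_ne_one {π : Equiv.Perm (Fin n)} (hπ : π ≠ 1) :
    ∃ k, ∃ h : k + 1 < n, π ⟨k + 1, h⟩ < π ⟨k, Nat.lt_of_succ_lt h⟩ := by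
  contrapose! hπ
  cases n with
  | zero => exact Subsingleton.elim _ _
  | succ n =>
    have hmono : StrictMono π := Fin.strictMono_iff_lt_succ.2 fun i =>
      (hπ i i.succ.isLt).lt_of_ne (π.injective.ne (by simp [Fin.ext_iff]))
    ext i
    exact congrArg Fin.val hmono.apply_eq

lemma simpleRefl_eq {k : ℕ} (h : k + 1 < n) :
    simpleRefl n k = Equiv.swap ⟨k, Nat.lt_of_succ_lt h⟩ ⟨k + 1, h⟩ := dif_pos h

lemma simpleRefl_mul_self (k : ℕ) : simpleRefl n k * simpleRefl n k = 1 := by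
  unfold simpleRefl
  split_ifs
  · exact Equiv.swap_mul_self _ _
  · exact one_mul 1

lemma wordProd_append_singleton (l : List ℕ) (k : ℕ) :
    wordProd n (l ++ [k]) = wordProd n l * simpleRefl n k := by
  simp [wordProd]

lemma invSet_mul_simpleRefl_of_lt {k : ℕ} (h : k + 1 < n) {π : Equiv.Perm (Fin n)}
    (hlt : π ⟨k, Nat.lt_of_succ_lt h⟩ < π ⟨k + 1, h⟩) :
    invSet n (π * simpleRefl n k) =
      insert (π ⟨k, Nat.lt_of_succ_lt h⟩, π ⟨k + 1, h⟩) (invSet n π) := by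
  ext ⟨x, y⟩
  obtain ⟨a, rfl⟩ := π.surjective x
  obtain ⟨b, rfl⟩ := π.surjective y
  simp only [mem_invSet, mem_insert, mul_inv_rev, Equiv.Perm.mul_apply,
    Equiv.Perm.coe_inv, Equiv.symm_apply_apply, simpleRefl_eq h, Equiv.symm_swap,
    Prod.mk.injEq, π.injective.eq_iff, Equiv.swap_apply_def]
  -- `s_k` preserves the order of positions except for the pair `k, k + 1`.
  split_ifs <;> grind [Fin.lt_def, Fin.ext_iff]

lemma card_invSet_mul_simpleRefl_of_lt {k : ℕ} (h : k + 1 < n) {π : Equiv.Perm (Fin n)}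
    (hlt : π ⟨k, Nat.lt_of_succ_lt h⟩ < π ⟨k + 1, h⟩) :
    #(invSet n (π * simpleRefl n k)) = #(invSet n π) + 1 := by
  rw [invSet_mul_simpleRefl_of_lt h hlt,
    card_insert_of_notMem (apply_mk_notMem_invSet (Fin.mk_le_mk.2 k.le_succ))]

lemma card_invSet_mul_simpleRefl_of_gt {k : ℕ} (h : k + 1 < n) {π : Equiv.Perm (Fin n)}
    (hgt : π ⟨k + 1, h⟩ < π ⟨k, Nat.lt_of_succ_lt h⟩) :
    #(invSet n (π * simpleRefl n k)) + 1 = #(invSet n π) := by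
  have hlt : (π * simpleRefl n k) ⟨k, Nat.lt_of_succ_lt h⟩ <
      (π * simpleRefl n k) ⟨k + 1, h⟩ := by
    simpa [simpleRefl_eq h] using hgt
  simpa [mul_assoc, simpleRefl_mul_self] using (card_invSet_mul_simpleRefl_of_lt h hlt).symm

lemma card_invSet_mul_simpleRefl_le (π : Equiv.Perm (Fin n)) (k : ℕ) :
    #(invSet n (π * simpleRefl n k)) ≤ #(invSet n π) + 1 := by
  by_cases h : k + 1 < n
  · rcases apply_lt_or_gt h π with hlt | hgt
    · exact (card_invSet_mul_simpleRefl_of_lt h hlt).le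
    · have := card_invSet_mul_simpleRefl_of_gt h hgt
      omega
  · simp [simpleRefl, h]

lemma card_invSet_wordProd_le (l : List ℕ) : #(invSet n (wordProd n l)) ≤ l.length := by
  induction l using List.reverseRecOn with
  | nil => simp [wordProd, invSet_one]
  | append_singleton l k ih =>
    rw [wordProd_append_singleton, List.length_append, List.length_singleton]
    exact (card_invSet_mul_simpleRefl_le _ k).trans (by omega)

lemma exists_word_length_eq_card_invSet (π : Equiv.Perm (Fin n)) :
    ∃ l, IsWord n l ∧ wordProd n l = π ∧ l.length = #(invSet n π) := by
  induction hc : #(invSet n π) using Nat.strong_induction_on generalizing π with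
  | _ c ih =>
    by_cases hπ : π = 1
    · subst hπ
      refine ⟨[], by simp [IsWord], rfl, ?_⟩
      simp [← hc, invSet_one]
    obtain ⟨k, h, hgt⟩ := exists_descent_of_ne_one hπ
    have hcard := card_invSet_mul_simpleRefl_of_gt h hgt
    obtain ⟨l, hw, hprod, hlen⟩ := ih _ (by omega) (π * simpleRefl n k) rfl
    refine ⟨l ++ [k], ?_, ?_, ?_⟩
    · simpa [IsWord, or_imp, forall_and] using ⟨hw, h⟩
    · rw [wordProd_append_singleton, hprod, mul_assoc, simpleRefl_mul_self, mul_one]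
    · simp only [List.length_append, List.length_singleton, hlen]
      omega

lemma IsReducedWord.length_eq_card_invSet {w : Equiv.Perm (Fin n)} {l : List ℕ}
    (hl : IsReducedWord n w l) : l.length = #(invSet n w) := by
  obtain ⟨hw, hprod, hmin⟩ := hl
  obtain ⟨l₀, hw₀, hprod₀, hlen₀⟩ := exists_word_length_eq_card_invSet w
  exact le_antisymm (hlen₀ ▸ hmin l₀ hw₀ hprod₀) (hprod ▸ card_invSet_wordProd_le l)

lemma rename_simpleRoot {k : ℕ} (h : k + 1 < n) (π : Equiv.Perm (Fin n)) :
    rename π (simpleRoot n k) = X (π ⟨k, Nat.lt_of_succ_lt h⟩) - X (π ⟨k + 1, h⟩) := by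
  simp [simpleRoot, h]

lemma prod_wordRoot_append_singleton (l : List ℕ) (k : ℕ) :
    ∏ j, wordRoot n (l ++ [k]) j =
      (∏ j, wordRoot n l j) * rename (wordProd n l) (simpleRoot n k) := by
  rw [← Fin.prod_congr' _ (by simp : l.length + 1 = (l ++ [k]).length), Fin.prod_univ_castSucc]
  congr 1
  · refine Fintype.prod_congr _ _ fun j => ?_
    simp [wordRoot, List.take_append_of_le_length j.isLt.le]
  · simp [wordRoot]

lemma prod_wordRoot_eq_prod_invSet {l : List ℕ} (hw : IsWord n l)
    (hl : l.length = #(invSet n (wordProd n l))) :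
    ∏ j, wordRoot n l j = ∏ p ∈ invSet n (wordProd n l), (X p.1 - X p.2) := by
  induction l using List.reverseRecOn with
  | nil => simp [wordProd, invSet_one]
  | append_singleton l k ih =>
    have hk : k + 1 < n := hw k (by simp)
    have hlen := card_invSet_wordProd_le (n := n) l
    rw [wordProd_append_singleton, List.length_append, List.length_singleton] at hl
    have hlt : wordProd n l ⟨k, Nat.lt_of_succ_lt hk⟩ < wordProd n l ⟨k + 1, hk⟩ := by
      refine (apply_lt_or_gt hk _).resolve_right fun hgt => ?_
      have := card_invSet_mul_simpleRefl_of_gt hk hgt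
      omega
    have hcard := card_invSet_mul_simpleRefl_of_lt hk hlt
    rw [prod_wordRoot_append_singleton, ih (fun b hb => hw b (by simp [hb])) (by omega),
      wordProd_append_singleton, invSet_mul_simpleRefl_of_lt hk hlt,
      prod_insert (apply_mk_notMem_invSet (Fin.mk_le_mk.2 k.le_succ)), rename_simpleRoot hk,
      mul_comm]

lemma billey_self {w : Equiv.Perm (Fin n)} {l : List ℕ} (hl : IsReducedWord n w l) :
    billey n w l = ∏ j, wordRoot n l j := by
  have hsort : ((univ : Finset (Fin l.length)).sort (· ≤ ·)).map l.get = l := by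
    rw [Fin.sort_univ, List.map_get_finRange]
  rw [billey, sum_eq_single_of_mem univ (mem_univ _), if_pos (by rwa [hsort])]
  intro J _ hJ
  refine if_neg fun hJred => hJ ?_
  have := hl.2.2 _ hJred.1 hJred.2.1
  rw [List.length_map, length_sort] at this
  exact eq_univ_of_card J (le_antisymm (card_le_univ J) (by simpa using this))

end

theorem billey_stmt_12_general (n : ℕ) (l : List ℕ)
    (hl : IsReducedWord n (Fin.revPerm : Equiv.Perm (Fin n)) l) :
    billey n (Fin.revPerm : Equiv.Perm (Fin n)) l =
      ∏ p ∈ Finset.univ.filter (fun p : Fin n × Fin n => p.1 < p.2),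
        (MvPolynomial.X p.1 - MvPolynomial.X p.2) := by
  have hlen := hl.length_eq_card_invSet
  rw [← hl.2.1] at hlen
  rw [billey_self hl, prod_wordRoot_eq_prod_invSet hl.1 hlen, hl.2.1, invSet_revPerm]

/-- For the longest element `w₀` of `S_n` (the order-reversing permutation),
`σ_{w₀}(w₀)` is the product of all positive roots `∏_{a < b} (t_a - t_b)`. -/
theorem billey_stmt_12 (n : ℕ) (hn : 1 ≤ n) (l : List ℕ)
    (hl : IsReducedWord n (Fin.revPerm : Equiv.Perm (Fin n)) l) :
    billey n (Fin.revPerm : Equiv.Perm (Fin n)) l =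
      ∏ p ∈ Finset.univ.filter (fun p : Fin n × Fin n => p.1 < p.2),
        (MvPolynomial.X p.1 - MvPolynomial.X p.2) :=
  billey_stmt_12_general n l hl
end
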